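/- arXiv:1010.5165 — 3 statements merged into one kernel-verified Lean document; each statement's English description precedes it below -/
import Mathlib

section
/- For every computable function h : ℕ → ℕ there is a computable function z : ℕ → ℕ → ℚ (computable as a function of the pair (n, i)) such that for each n the sequence i ↦ z n i is a quickly converging Cauchy sequence of rationals, and the real number it represents is zero exactly when n is not in the range of h: for all n, Filter.Tendsto (fun i => ((z n i : ℝ))) Filter.atTop (nhds 0) if and only if ¬∃ k, h k = n. -/
open Encodable

namespace CCSCR

/-! ### A primitive recursive membership test for the range of the `Rat` encoding -/

def inS (m : ℕ) : Bool :=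
  (m.unpair.2 != 0) && (Nat.gcd ((m.unpair.1 + 1) / 2) m.unpair.2 == 1)

def gstep (p : ℕ × ℕ) : ℕ × ℕ := if p.2 = 0 then p else (p.2, p.1 % p.2)

lemma gstep_iter : ∀ (N : ℕ) (p : ℕ × ℕ), p.2 ≤ N → gstep^[N] p = (Nat.gcd p.2 p.1, 0) := by
  intro N
  induction N with
  | zero =>
    rintro ⟨a, b⟩ hp
    simp only [Nat.le_zero] at hp
    subst hp
    simp
  | succ N ih =>
    intro p hp
    rw [Function.iterate_succ_apply]
    by_cases h2 : p.2 = 0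
    · rw [show gstep p = p from by simp [gstep, h2]]
      exact ih p (by omega)
    · have hlt : p.1 % p.2 < p.2 := Nat.mod_lt _ (Nat.pos_of_ne_zero h2)
      rw [show gstep p = (p.2, p.1 % p.2) from by simp [gstep, h2]]
      rw [ih _ (by show p.1 % p.2 ≤ N; omega)]
      rw [Nat.gcd_rec p.2 p.1]

lemma primrec_gcd : Primrec₂ Nat.gcd := by
  have hstep : Primrec gstep := by
    refine Primrec.ite (Primrec.eq.comp Primrec.snd (Primrec.const 0)) Primrec.id ?_
    exact Primrec.pair Primrec.snd (Primrec.nat_mod.comp Primrec.fst Primrec.snd)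
  have H : Primrec (fun p : ℕ × ℕ => (gstep^[p.1] (p.2, p.1)).1) :=
    Primrec.fst.comp
      (Primrec.nat_iterate Primrec.fst (Primrec.pair Primrec.snd Primrec.fst)
        ((hstep.comp Primrec.snd).to₂))
  exact Primrec₂.mk (H.of_eq fun p => by rw [gstep_iter p.1 (p.2, p.1) (le_refl _)])

lemma primrec_inS : Primrec inS := by
  have u1 : Primrec fun m : ℕ => m.unpair.1 := Primrec.fst.comp Primrec.unpair
  have u2 : Primrec fun m : ℕ => m.unpair.2 := Primrec.snd.comp Primrec.unpair
  have t1 : Primrec fun m : ℕ => (m.unpair.2 != 0) :=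
    (Primrec.dom_bool Bool.not).comp (Primrec.beq.comp u2 (Primrec.const 0))
  have tg : Primrec fun m : ℕ => Nat.gcd ((m.unpair.1 + 1) / 2) m.unpair.2 :=
    primrec_gcd.comp
      (Primrec.nat_div.comp (Primrec.nat_add.comp u1 (Primrec.const 1)) (Primrec.const 2)) u2
  have t2 : Primrec fun m : ℕ => (Nat.gcd ((m.unpair.1 + 1) / 2) m.unpair.2 == 1) :=
    Primrec.beq.comp tg (Primrec.const 1)
  exact (Primrec₂.comp (Primrec.dom_bool₂ (· && ·)) t1 t2).of_eq fun m => rfl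

/-! ### The rank function -/

def rank (t : ℕ) : ℕ := Nat.rec 0 (fun k ih => ih + (bif inS k then 1 else 0)) t

lemma primrec_rank : Primrec rank := by
  refine Primrec.nat_rec₁ 0 ?_
  exact Primrec.nat_add.comp Primrec.snd
    (Primrec.cond (primrec_inS.comp Primrec.fst) (Primrec.const 1) (Primrec.const 0))

lemma rank_countP (t : ℕ) : rank t = (List.range t).countP inS := by
  induction t with
  | zero => rfl
  | succ t ih =>
    have h1 : rank (t + 1) = rank t + (bif inS t then 1 else 0) := rfl
    rw [h1, ih, List.range_succ, List.countP_append]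
    cases h : inS t <;> simp [List.countP_cons, h]

/-! ### Facts about the encodings of `ℤ` and `ℚ` -/

lemma encode_int_natAbs (z : ℤ) : (Encodable.encode z + 1) / 2 = z.natAbs := by
  rcases z with n | n
  · rw [show Encodable.encode (Int.ofNat n) = 2 * n from rfl]
    show (2 * n + 1) / 2 = n
    omega
  · rw [show Encodable.encode (Int.negSucc n) = 2 * n + 1 from rfl]
    rw [Int.natAbs_negSucc]
    omega

def intOf (a : ℕ) : ℤ := if a % 2 = 0 then ((a / 2 : ℕ) : ℤ) else Int.negSucc (a / 2)

lemma encode_intOf (a : ℕ) : Encodable.encode (intOf a) = a := by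
  unfold intOf
  split
  · rw [show Encodable.encode ((a / 2 : ℕ) : ℤ) = 2 * (a / 2) from rfl]
    omega
  · rw [show Encodable.encode (Int.negSucc (a / 2)) = 2 * (a / 2) + 1 from rfl]
    omega

lemma natAbs_intOf (a : ℕ) : (intOf a).natAbs = (a + 1) / 2 := by
  rw [← encode_int_natAbs, encode_intOf]

lemma enc0 (q : ℚ) :
    @Encodable.encode ℚ Rat.instEncodable q = Nat.pair (Encodable.encode q.num) q.den := rfl

lemma mem_range_iff (m : ℕ) :
    m ∈ Set.range (@Encodable.encode ℚ Rat.instEncodable) ↔ inS m = true := by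
  constructor
  · rintro ⟨q, rfl⟩
    rw [enc0]
    simp only [inS, Nat.unpair_pair, Bool.and_eq_true, bne_iff_ne, ne_eq, beq_iff_eq]
    refine ⟨q.den_nz, ?_⟩
    rw [encode_int_natAbs]
    exact q.reduced
  · intro hm
    simp only [inS, Bool.and_eq_true, bne_iff_ne, ne_eq, beq_iff_eq] at hm
    obtain ⟨hb, hg⟩ := hm
    refine ⟨⟨intOf m.unpair.1, m.unpair.2, hb, by rw [natAbs_intOf]; exact hg⟩, ?_⟩
    rw [enc0]
    show Nat.pair (Encodable.encode (intOf m.unpair.1)) m.unpair.2 = m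
    rw [encode_intOf]
    exact Nat.pair_unpair m

attribute [local instance] Encodable.decidableRangeEncode

lemma encodeQ_eq_rank (q : ℚ) :
    @Encodable.encode ℚ (Primcodable.toEncodable) q =
      rank (@Encodable.encode ℚ Rat.instEncodable q) := by
  have h0 : @Encodable.encode ℚ (Primcodable.toEncodable) q =
      (List.range (@Encodable.encode ℚ Rat.instEncodable q)).countP
        (fun m => decide (m ∈ Set.range (@Encodable.encode ℚ Rat.instEncodable))) := rfl
  rw [h0, rank_countP]
  refine List.countP_congr fun m _ => ?_
  rw [decide_eq_true_eq]
  exact mem_range_iff m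

lemma ofNat_rank (q : ℚ) :
    Denumerable.ofNat ℚ (rank (@Encodable.encode ℚ Rat.instEncodable q)) = q := by
  rw [← encodeQ_eq_rank]
  exact Denumerable.ofNat_encode q

/-! ### The computable function `gq` with `gq 0 = 0`, `gq (k+1) = 2⁻¹ ^ k` -/

def gq (m : ℕ) : ℚ := Nat.rec 0 (fun k _ => (2 : ℚ)⁻¹ ^ k) m

lemma gq_zero : gq 0 = 0 := rfl

lemma gq_succ (k : ℕ) : gq (k + 1) = (2 : ℚ)⁻¹ ^ k := rfl

lemma num_inv_two_pow (k : ℕ) : ((2 : ℚ)⁻¹ ^ k).num = 1 := by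
  rw [Rat.num_pow]
  have h1 : ((2 : ℚ)⁻¹).num = 1 := by norm_num
  rw [h1, one_pow]

lemma den_inv_two_pow (k : ℕ) : ((2 : ℚ)⁻¹ ^ k).den = 2 ^ k := by
  rw [Rat.den_pow]
  have h1 : ((2 : ℚ)⁻¹).den = 2 := by norm_num
  rw [h1]

def G (m : ℕ) : ℕ :=
  Nat.casesOn m (@Encodable.encode ℚ (Primcodable.toEncodable) (0 : ℚ))
    (fun k => rank (Nat.pair 2 (2 ^ k)))

lemma primrec_pow2 : Primrec (fun k : ℕ => 2 ^ k) := by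
  have h1 : Primrec (fun k : ℕ => (Nat.rec 1 (fun _ ih => 2 * ih) k : ℕ)) :=
    Primrec.nat_rec₁ 1 (Primrec.nat_mul.comp (Primrec.const 2) Primrec.snd)
  refine h1.of_eq fun k => ?_
  induction k with
  | zero => rfl
  | succ k ih => rw [pow_succ]; simp only [ih]; ring

lemma primrec_G : Primrec G := by
  refine Primrec.nat_casesOn₁ _ ?_
  exact primrec_rank.comp (Primrec₂.natPair.comp (Primrec.const 2) primrec_pow2)

lemma encode_inv_two_pow (k : ℕ) :
    @Encodable.encode ℚ Rat.instEncodable ((2 : ℚ)⁻¹ ^ k) = Nat.pair 2 (2 ^ k) := by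
  rw [enc0, num_inv_two_pow, den_inv_two_pow]
  rfl

lemma ofNat_G (m : ℕ) : Denumerable.ofNat ℚ (G m) = gq m := by
  cases m with
  | zero => exact Denumerable.ofNat_encode 0
  | succ k =>
    show Denumerable.ofNat ℚ (rank (Nat.pair 2 (2 ^ k))) = (2 : ℚ)⁻¹ ^ k
    rw [← encode_inv_two_pow k]
    exact ofNat_rank _

lemma computable_gq : Computable gq := by
  have h1 : Computable (fun m : ℕ => Denumerable.ofNat ℚ (G m)) :=
    (Primrec.ofNat ℚ).to_comp.comp primrec_G.to_comp
  exact h1.of_eq ofNat_G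

/-! ### The stage function -/

def Wfun (h : ℕ → ℕ) (n i : ℕ) : ℕ :=
  Nat.rec (if h 0 = n then 1 else 0)
    (fun j ih => if ih ≠ 0 then ih else if h (j + 1) = n then j + 2 else 0) i

lemma Wfun_zero (h : ℕ → ℕ) (n : ℕ) : Wfun h n 0 = if h 0 = n then 1 else 0 := rfl

lemma Wfun_succ (h : ℕ → ℕ) (n i : ℕ) :
    Wfun h n (i + 1) =
      if Wfun h n i ≠ 0 then Wfun h n i else if h (i + 1) = n then i + 2 else 0 := rfl

lemma Wfun_neg (h : ℕ → ℕ) (n i : ℕ) (H : ¬ ∃ k, k ≤ i ∧ h k = n) : Wfun h n i = 0 := by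
  induction i with
  | zero =>
    rw [Wfun_zero, if_neg]
    exact fun hc => H ⟨0, le_refl _, hc⟩
  | succ i ih =>
    have Hi : ¬ ∃ k, k ≤ i ∧ h k = n := by
      rintro ⟨k, hk, hkn⟩; exact H ⟨k, by omega, hkn⟩
    rw [Wfun_succ, ih Hi, if_neg (by simp), if_neg (fun hc => H ⟨i + 1, le_refl _, hc⟩)]

lemma Wfun_pos (h : ℕ → ℕ) (n i : ℕ) (H : ∃ k, k ≤ i ∧ h k = n) :
    Wfun h n i = Nat.find H + 1 := by
  induction i with
  | zero =>
    have hkn : h 0 = n := by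
      obtain ⟨k, hk, hkn⟩ := H
      have hk0 : k = 0 := by omega
      subst hk0
      exact hkn
    rw [Wfun_zero, if_pos hkn]
    have : Nat.find H = 0 := Nat.le_zero.mp (Nat.find_le ⟨le_refl _, hkn⟩)
    rw [this]
  | succ i ih =>
    by_cases Hi : ∃ k, k ≤ i ∧ h k = n
    · have hih := ih Hi
      rw [Wfun_succ, if_pos (by rw [hih]; omega), hih]
      congr 1
      apply le_antisymm
      · obtain ⟨hle, hn⟩ := Nat.find_spec H
        have h1 := Nat.find_min' Hi (m := Nat.find H) ⟨?_, hn⟩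
        · exact h1
        · obtain ⟨hle2, hn2⟩ := Nat.find_spec Hi
          have := Nat.find_min' H (m := Nat.find Hi) ⟨by omega, hn2⟩
          omega
      · obtain ⟨hle, hn⟩ := Nat.find_spec Hi
        exact Nat.find_le ⟨by omega, hn⟩
    · have h0 : Wfun h n i = 0 := Wfun_neg h n i Hi
      have hsucc : h (i + 1) = n := by
        obtain ⟨k, hk, hkn⟩ := H
        rcases Nat.lt_or_ge k (i + 1) with hlt | hge
        · exact absurd ⟨k, by omega, hkn⟩ Hi
        · have : k = i + 1 := by omega
          rwa [this] at hkn
      rw [Wfun_succ, h0, if_neg (by simp), if_pos hsucc]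
      have : Nat.find H = i + 1 := by
        apply le_antisymm
        · exact Nat.find_le ⟨le_refl _, hsucc⟩
        · by_contra hc
          push_neg at hc
          obtain ⟨hle, hn⟩ := Nat.find_spec H
          exact Hi ⟨Nat.find H, by omega, hn⟩
      omega

lemma computable_Wfun {h : ℕ → ℕ} (hh : Computable h) :
    Computable (fun p : ℕ × ℕ => Wfun h p.1 p.2) := by
  have hbase : Computable (fun p : ℕ × ℕ => if h 0 = p.1 then 1 else 0) := by
    have hc : Computable (fun p : ℕ × ℕ => (h 0 == p.1 : Bool)) :=
      (Primrec.beq.to_comp).comp (Computable.const (h 0)) Computable.fst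
    exact (Computable.cond hc (Computable.const 1) (Computable.const 0)).of_eq
      (fun p => by by_cases hp : h 0 = p.1 <;> simp [hp, Bool.cond_eq_ite, beq_iff_eq])
  have hstep : Computable₂ (fun (p : ℕ × ℕ) (q : ℕ × ℕ) =>
      if q.2 ≠ 0 then q.2 else if h (q.1 + 1) = p.1 then q.1 + 2 else 0) := by
    have hc1 : Computable (fun pq : (ℕ × ℕ) × ℕ × ℕ => (pq.2.2 == 0 : Bool)) :=
      (Primrec.beq.to_comp).comp (Computable.snd.comp Computable.snd) (Computable.const 0)
    have hc2 : Computable (fun pq : (ℕ × ℕ) × ℕ × ℕ =>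
        (h (pq.2.1 + 1) == pq.1.1 : Bool)) :=
      (Primrec.beq.to_comp).comp
        (hh.comp ((Primrec.succ.to_comp).comp (Computable.fst.comp Computable.snd)))
        (Computable.fst.comp Computable.fst)
    have hmain : Computable (fun pq : (ℕ × ℕ) × ℕ × ℕ =>
        bif (pq.2.2 == 0)
        then (bif (h (pq.2.1 + 1) == pq.1.1) then pq.2.1 + 2 else 0)
        else pq.2.2) :=
      Computable.cond hc1
        (Computable.cond hc2
          ((Primrec.succ.to_comp).comp ((Primrec.succ.to_comp).comp
            (Computable.fst.comp Computable.snd)))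
          (Computable.const 0))
        (Computable.snd.comp Computable.snd)
    refine Computable₂.mk (hmain.of_eq fun pq => ?_)
    by_cases h2 : pq.2.2 = 0 <;> by_cases h3 : h (pq.2.1 + 1) = pq.1.1 <;>
      simp [h2, h3, Bool.cond_eq_ite, beq_iff_eq]
  have hr := Computable.nat_rec (Computable.snd (α := ℕ) (β := ℕ)) hbase hstep
  exact hr.of_eq fun p => rfl

end CCSCR

open CCSCR in
theorem computable_cauchy_sequences_coding_range (h : ℕ → ℕ) (hh : Computable h) :
    ∃ z : ℕ → ℕ → ℚ,
      Computable (fun p : ℕ × ℕ => z p.1 p.2) ∧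
      (∀ n i j, i ≤ j → |z n i - z n j| ≤ (2 : ℚ)⁻¹ ^ i) ∧
      (∀ n, Filter.Tendsto (fun i => ((z n i : ℝ))) Filter.atTop (nhds 0) ↔
        ¬∃ k, h k = n) := by
  refine ⟨fun n i => gq (Wfun h n i), ?_, ?_, ?_⟩
  · exact computable_gq.comp (computable_Wfun hh)
  · -- quickly converging Cauchy
    show ∀ n i j, i ≤ j → |gq (Wfun h n i) - gq (Wfun h n j)| ≤ (2 : ℚ)⁻¹ ^ i
    intro n i j hij
    by_cases Hj : ∃ k, k ≤ j ∧ h k = n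
    · by_cases Hi : ∃ k, k ≤ i ∧ h k = n
      · have hfind : Nat.find Hj = Nat.find Hi := by
          apply le_antisymm
          · obtain ⟨hle, hn⟩ := Nat.find_spec Hi
            exact Nat.find_le ⟨by omega, hn⟩
          · obtain ⟨hle, hn⟩ := Nat.find_spec Hj
            exact Nat.find_le ⟨by
              obtain ⟨hle2, hn2⟩ := Nat.find_spec Hi
              have := Nat.find_min' Hj (m := Nat.find Hi) ⟨by omega, hn2⟩
              omega, hn⟩
        rw [Wfun_pos h n i Hi, Wfun_pos h n j Hj, hfind, sub_self, abs_zero]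
        positivity
      · have hKgt : i < Nat.find Hj := by
          by_contra hc
          push_neg at hc
          obtain ⟨hle, hn⟩ := Nat.find_spec Hj
          exact Hi ⟨Nat.find Hj, hc, hn⟩
        rw [Wfun_neg h n i Hi, Wfun_pos h n j Hj, gq_zero, gq_succ, zero_sub, abs_neg,
          abs_of_nonneg (by positivity)]
        exact pow_le_pow_of_le_one (by norm_num) (by norm_num) (by omega)
    · have Hi : ¬ ∃ k, k ≤ i ∧ h k = n := by
        rintro ⟨k, hk, hkn⟩; exact Hj ⟨k, by omega, hkn⟩
      rw [Wfun_neg h n i Hi, Wfun_neg h n j Hj, sub_self, abs_zero]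
      positivity
  · -- the limit characterization
    show ∀ n, Filter.Tendsto (fun i => ((gq (Wfun h n i) : ℚ) : ℝ)) Filter.atTop (nhds 0) ↔
      ¬∃ k, h k = n
    intro n
    constructor
    · intro hT
      rintro ⟨k, hk⟩
      have Hglob : ∃ k, h k = n := ⟨k, hk⟩
      have hKspec : h (Nat.find Hglob) = n := Nat.find_spec Hglob
      have hconst : ∀ i, Nat.find Hglob ≤ i → gq (Wfun h n i) = (2 : ℚ)⁻¹ ^ (Nat.find Hglob) := by
        intro i hi
        have Hi : ∃ m, m ≤ i ∧ h m = n := ⟨Nat.find Hglob, hi, hKspec⟩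
        have hfind : Nat.find Hi = Nat.find Hglob := by
          apply le_antisymm
          · exact Nat.find_le ⟨hi, hKspec⟩
          · obtain ⟨hle, hn⟩ := Nat.find_spec Hi
            exact Nat.find_min' Hglob hn
        rw [Wfun_pos h n i Hi, gq_succ, hfind]
      have hT2 : Filter.Tendsto (fun _ : ℕ => (((2 : ℚ)⁻¹ ^ (Nat.find Hglob) : ℚ) : ℝ))
          Filter.atTop (nhds 0) := by
        refine hT.congr' ?_
        filter_upwards [Filter.eventually_ge_atTop (Nat.find Hglob)] with i hi
        rw [hconst i hi]
      have heq := tendsto_nhds_unique hT2 tendsto_const_nhds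
      have hpos : (0 : ℝ) < (((2 : ℚ)⁻¹ ^ (Nat.find Hglob) : ℚ) : ℝ) := by positivity
      rw [heq] at hpos
      exact lt_irrefl _ hpos
    · intro hno
      have hz : ∀ i, gq (Wfun h n i) = 0 := by
        intro i
        have Hi : ¬ ∃ k, k ≤ i ∧ h k = n := by
          rintro ⟨k, _, hkn⟩; exact hno ⟨k, hkn⟩
        rw [Wfun_neg h n i Hi, gq_zero]
      simp only [hz, Rat.cast_zero]
      exact tendsto_const_nhds
end

section
/- There exists a computable function z : ℕ → ℕ → ℚ (computable as a function of the pair (n, i)) such that each sequence i ↦ z n i is a quickly converging Cauchy sequence of rationals, but there is no computable function f : ℕ → Bool such that for all n, f n = true if and only if Filter.Tendsto (fun i => ((z n i : ℝ))) Filter.atTop (nhds 0). In other words, deciding whether the real number represented by the n-th sequence equals zero is not computable, so no computable sequence of Jordan canonical forms for the matrices M(z_n) can exist. -/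
/-!
The `n`-th sequence halves at every step at which the `n`-th program, run on input `0`, has not
yet halted, and freezes once it halts. It is computable and converges quickly, and its limit is
`0` exactly when the program never halts, so a zero test would decide the halting problem. The
only technical point is computability into `ℚ`, whose standard coding numbers a rational by its
rank among the raw codes `Nat.pair (encode num) den`.
-/

open Encodable Denumerable Filter Topology Nat.Partrec

theorem Primrec.nat_count {α : Type*} [Primcodable α] {p : α → ℕ → Prop}
    [∀ a, DecidablePred (p a)] (hp : PrimrecRel p) :
    Primrec₂ fun a n => Nat.count (p a) n := by
  have hfilter : Primrec₂ fun (L : List ℕ) a => L.filter (fun k => p a k) :=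
    PrimrecRel.listFilter (R := fun k a => p a k) (hp.comp Primrec.snd Primrec.fst)
  refine (Primrec.list_length.comp (hfilter.comp (Primrec.list_range.comp Primrec.snd)
    Primrec.fst)).of_eq fun _ => ?_
  simp [Nat.count, List.countP_eq_length_filter]

/-- `Denumerable.ofEncodableOfInfinite` codes `x` by the number of codes below `encode x`. -/
theorem Primrec.of_denumerable_ofEncodableOfInfinite {α β : Type*} [Encodable α] [Infinite α]
    [Primcodable β] {f : β → α} (hf : Primrec fun b => encode (f b))
    (hrange : PrimrecPred (· ∈ Set.range (encode : α → ℕ))) :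
    @Primrec β α _ (@Primcodable.ofDenumerable α (Denumerable.ofEncodableOfInfinite α)) f := by
  let := Denumerable.ofEncodableOfInfinite α
  obtain ⟨_, hdec⟩ := hrange
  have hcount := Primrec.nat_count (p := fun (_ : Unit) k => k ∈ Set.range (encode : α → ℕ))
    (hdec.comp Primrec.snd).primrecPred
  refine Primrec.encode_iff.mp ((hcount.comp (Primrec.const ()) hf).of_eq fun b => ?_)
  show Nat.count _ _ = (List.range (encode (f b))).countP _
  unfold Nat.count
  congr!

theorem Int.natAbs_eq_encode_add_one_div_two (z : ℤ) : z.natAbs = (encode z + 1) / 2 := by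
  cases z with
  | ofNat n => exact (show (2 * n + 1) / 2 = n by omega).symm
  | negSucc n => exact (show (2 * n + 1 + 1) / 2 = n + 1 by omega).symm

theorem Primrec.int_natAbs : Primrec Int.natAbs :=
  (Primrec.nat_div.comp (Primrec.succ.comp Primrec.encode) (Primrec.const 2)).of_eq
    fun z => (Int.natAbs_eq_encode_add_one_div_two z).symm

theorem Primrec.nat_dvd : PrimrecRel ((· ∣ ·) : ℕ → ℕ → Prop) :=
  (Primrec.eq.comp (Primrec.nat_mod.comp Primrec.snd Primrec.fst) (Primrec.const 0)).of_eq
    fun _ => Nat.dvd_iff_mod_eq_zero.symm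

theorem Nat.coprime_iff_forall_lt {a b : ℕ} :
    a.Coprime b ↔ ∀ d < a + b + 1, d ∣ a → d ∣ b → d = 1 := by
  refine ⟨fun h d _ hda hdb => Nat.eq_one_of_dvd_coprimes h hda hdb, fun h => ?_⟩
  have hgcd : Nat.gcd a b ≤ a + b := by
    rcases Nat.eq_zero_or_pos a with rfl | ha
    · simp
    · exact (Nat.gcd_le_left b ha).trans (Nat.le_add_right a b)
  exact h _ (Nat.lt_succ_of_le hgcd) (Nat.gcd_dvd_left a b) (Nat.gcd_dvd_right a b)

theorem Primrec.nat_coprime : PrimrecRel Nat.Coprime := by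
  have hcommon : PrimrecRel fun (d : ℕ) (ab : ℕ × ℕ) => ¬d ∣ ab.1 ∨ ¬d ∣ ab.2 ∨ d = 1 :=
    (Primrec.nat_dvd.comp Primrec.fst (Primrec.fst.comp Primrec.snd)).not.or
      ((Primrec.nat_dvd.comp Primrec.fst (Primrec.snd.comp Primrec.snd)).not.or
        (Primrec.eq.comp Primrec.fst (Primrec.const 1)))
  refine (hcommon.forall_mem_list.comp (Primrec.list_range.comp
      (Primrec.succ.comp (Primrec.nat_add.comp Primrec.fst Primrec.snd))) Primrec.id).of_eq
    fun ⟨a, b⟩ => ?_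
  simp only [List.mem_range, Nat.coprime_iff_forall_lt, imp_iff_not_or]
  rfl

theorem Rat.mem_range_encode_iff (k : ℕ) :
    k ∈ Set.range (encode : ℚ → ℕ) ↔
      0 < k.unpair.2 ∧ (ofNat ℤ k.unpair.1).natAbs.Coprime k.unpair.2 := by
  constructor
  · rintro ⟨q, rfl⟩
    rw [show encode q = Nat.pair (encode q.num) q.den from rfl, Nat.unpair_pair, ofNat_encode]
    exact ⟨q.den_pos, q.reduced⟩
  · rintro ⟨hden, hcop⟩
    refine ⟨⟨ofNat ℤ k.unpair.1, k.unpair.2, hden.ne', hcop⟩, ?_⟩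
    show Nat.pair (encode (ofNat ℤ k.unpair.1)) k.unpair.2 = k
    rw [encode_ofNat, Nat.pair_unpair]

theorem Primrec.rat_inv_two_pow : Primrec fun m : ℕ => (2 : ℚ)⁻¹ ^ m := by
  have hpow : Primrec fun m : ℕ => 2 ^ m :=
    (Primrec₂.unpaired'.1 Nat.Primrec.pow).comp (Primrec.const 2) Primrec.id
  have hencode (m : ℕ) : encode ((2 : ℚ)⁻¹ ^ m) = Nat.pair 2 (2 ^ m) := by
    have hnum : ((2 : ℚ)⁻¹ ^ m).num = 1 := by rw [Rat.num_pow]; norm_num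
    have hden : ((2 : ℚ)⁻¹ ^ m).den = 2 ^ m := by rw [Rat.den_pow]; norm_num
    show Nat.pair (encode ((2 : ℚ)⁻¹ ^ m).num) ((2 : ℚ)⁻¹ ^ m).den = _
    rw [hnum, hden]
    rfl
  have hu1 := Primrec.fst.comp Primrec.unpair
  have hu2 := Primrec.snd.comp Primrec.unpair
  refine Primrec.of_denumerable_ofEncodableOfInfinite
    ((Primrec₂.natPair.comp (Primrec.const 2) hpow).of_eq fun m => (hencode m).symm) ?_
  exact ((Primrec.nat_lt.comp (Primrec.const 0) hu2).and (Primrec.nat_coprime.comp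
    (Primrec.int_natAbs.comp ((Primrec.ofNat ℤ).comp hu1)) hu2)).of_eq
    fun k => (Rat.mem_range_encode_iff k).symm

section MonotonePred

variable {p : ℕ → Prop} [DecidablePred p]

theorem Nat.count_not_eq_of_le (hp : Monotone p) {k j : ℕ} (hk : p k) (hkj : k ≤ j) :
    Nat.count (¬p ·) j = Nat.count (¬p ·) k := by
  obtain ⟨d, rfl⟩ := Nat.exists_eq_add_of_le hkj
  rw [Nat.count_add, Nat.count_iff_forall_not.2 fun m _ => not_not.2 (hp (k.le_add_right m) hk),
    add_zero]

theorem abs_inv_two_pow_count_not_sub_le (hp : Monotone p) {i j : ℕ} (hij : i ≤ j) :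
    |(2 : ℚ)⁻¹ ^ Nat.count (¬p ·) i - 2⁻¹ ^ Nat.count (¬p ·) j| ≤ 2⁻¹ ^ i := by
  by_cases h : ∃ k < i, p k
  · obtain ⟨k, hki, hk⟩ := h
    rw [Nat.count_not_eq_of_le hp hk (hki.le.trans hij), Nat.count_not_eq_of_le hp hk hki.le,
      sub_self, abs_zero]
    positivity
  · push Not at h
    have hi : Nat.count (¬p ·) i = i := Nat.count_iff_forall.2 h
    have hle : (2 : ℚ)⁻¹ ^ Nat.count (¬p ·) j ≤ 2⁻¹ ^ i :=
      hi ▸ pow_le_pow_of_le_one (by norm_num) (by norm_num) (Nat.count_monotone _ hij)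
    rw [hi]
    exact abs_sub_le_of_nonneg_of_le (by positivity) le_rfl (by positivity) hle

theorem tendsto_inv_two_pow_count_not_iff (hp : Monotone p) :
    Tendsto (fun i => (((2 : ℚ)⁻¹ ^ Nat.count (¬p ·) i : ℚ) : ℝ)) atTop (𝓝 0) ↔ ∀ k, ¬p k := by
  constructor
  · intro hlim k hk
    have hconst : Tendsto (fun i => (((2 : ℚ)⁻¹ ^ Nat.count (¬p ·) i : ℚ) : ℝ)) atTop
        (𝓝 (((2 : ℚ)⁻¹ ^ Nat.count (¬p ·) k : ℚ) : ℝ)) :=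
      tendsto_const_nhds.congr' <| (eventually_ge_atTop k).mono fun j hkj => by
        dsimp only; rw [Nat.count_not_eq_of_le hp hk hkj]
    exact (by positivity : (((2 : ℚ)⁻¹ ^ Nat.count (¬p ·) k : ℚ) : ℝ) ≠ 0)
      (tendsto_nhds_unique hconst hlim)
  · intro h
    simp only [Nat.count_iff_forall.2 fun k _ => h k, Rat.cast_pow, Rat.cast_inv, Rat.cast_ofNat]
    exact tendsto_pow_atTop_nhds_zero_of_lt_one (by norm_num) (by norm_num)

end MonotonePred

namespace Nat.Partrec.Code

theorem monotone_isSome_evaln (c : Code) (n : ℕ) :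
    Monotone fun k => (evaln k c n).isSome := fun _ _ hk h => by
  obtain ⟨x, hx⟩ := Option.isSome_iff_exists.1 h
  exact Option.isSome_iff_exists.2 ⟨x, evaln_mono hk hx⟩

theorem eval_dom_iff_exists_isSome_evaln (c : Code) (n : ℕ) :
    (c.eval n).Dom ↔ ∃ k, (evaln k c n).isSome := by
  simp only [Part.dom_iff_mem, evaln_complete, Option.isSome_iff_exists]
  exact exists_comm

end Nat.Partrec.Code

def haltingSeq (n i : ℕ) : ℚ :=
  (2 : ℚ)⁻¹ ^ Nat.count (fun k => ¬(Code.evaln k (ofNat Code n) 0).isSome) i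

theorem computable_haltingSeq : Computable fun p : ℕ × ℕ => haltingSeq p.1 p.2 := by
  have hhalts : PrimrecRel fun n k => (Code.evaln k (ofNat Code n) 0).isSome :=
    Primrec.primrecPred <| (Primrec.option_isSome.comp (Code.primrec_evaln.comp
      ((Primrec.snd.pair ((Primrec.ofNat Code).comp Primrec.fst)).pair (Primrec.const 0)))).of_eq
      fun _ => Bool.decide_eq_true.symm
  exact (Primrec.rat_inv_two_pow.comp (Primrec.nat_count hhalts.not)).to_comp

theorem abs_haltingSeq_sub_le (n : ℕ) {i j : ℕ} (hij : i ≤ j) :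
    |haltingSeq n i - haltingSeq n j| ≤ (2 : ℚ)⁻¹ ^ i :=
  abs_inv_two_pow_count_not_sub_le (Code.monotone_isSome_evaln _ 0) hij

theorem tendsto_haltingSeq_iff (n : ℕ) :
    Tendsto (fun i => (haltingSeq n i : ℝ)) atTop (𝓝 0) ↔ ¬((ofNat Code n).eval 0).Dom := by
  rw [Code.eval_dom_iff_exists_isSome_evaln, not_exists]
  exact tendsto_inv_two_pow_count_not_iff (Code.monotone_isSome_evaln _ 0)

theorem zero_testing_not_computable :
    ∃ z : ℕ → ℕ → ℚ,
      Computable (fun p : ℕ × ℕ => z p.1 p.2) ∧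
      (∀ n i j, i ≤ j → |z n i - z n j| ≤ (2 : ℚ)⁻¹ ^ i) ∧
      ¬∃ f : ℕ → Bool, Computable f ∧
        ∀ n, f n = true ↔
          Filter.Tendsto (fun i => ((z n i : ℝ))) Filter.atTop (nhds 0) := by
  refine ⟨haltingSeq, computable_haltingSeq, fun n _ _ => abs_haltingSeq_sub_le n, ?_⟩
  rintro ⟨f, hf, hf_iff⟩
  have hdiverges : ComputablePred fun c : Code => ¬(c.eval 0).Dom :=
    ComputablePred.computable_iff.2 ⟨fun c => f (encode c), hf.comp Computable.encode,
      funext fun c => by rw [hf_iff, tendsto_haltingSeq_iff, ofNat_encode]⟩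
  exact ComputablePred.halting_problem 0 (by simpa only [not_not] using hdiverges.not)
end

section
/- Every enumerated filter on a countable poset can be extended to an unbounded enumerated filter: if P is a countable type with a partial order ≤ and f : ℕ → P is an enumerated filter on P, then there exists an enumerated filter g : ℕ → P such that Set.range f ⊆ Set.range g and g is unbounded, i.e., there is no q ∈ P with q < g i for all i ∈ ℕ. -/
/-- `f : ℕ → P` is an enumerated filter on the countable poset `P`. -/
def IsEnumeratedFilter {P : Type*} [PartialOrder P] (f : ℕ → P) : Prop :=
  (∀ i j : ℕ, ∃ k : ℕ, f k ≤ f i ∧ f k ≤ f j) ∧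
  (∀ q : P, (∃ i : ℕ, f i ≤ q) → ∃ k : ℕ, f k = q)

theorem enumerated_filter_extends_to_unbounded
    {P : Type*} [Countable P] [PartialOrder P]
    (f : ℕ → P) (hf : IsEnumeratedFilter f) :
    ∃ g : ℕ → P, IsEnumeratedFilter g ∧ Set.range f ⊆ Set.range g ∧
      ¬∃ q : P, ∀ i : ℕ, q < g i := by
  classical
  haveI : Nonempty P := ⟨f 0⟩
  obtain ⟨e, he⟩ := exists_surjective_nat P
  -- invariant for chain elements
  set Inv : P → Prop := fun d => (∃ k, f k = d) ∨ ∀ i, d ≤ f i with hInv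
  -- one step of the construction
  set step : ℕ → P → P := fun n p =>
    if e n ≤ p ∧ ∀ i, e n ≤ f i then e n
    else if h2 : ∃ d, d ≤ p ∧ d ≤ f n ∧ Inv d then h2.choose else p with hstepdef
  have hstep : ∀ n p, Inv p → step n p ≤ p ∧ step n p ≤ f n ∧ Inv (step n p) := by
    intro n p hp
    by_cases h : e n ≤ p ∧ ∀ i, e n ≤ f i
    · simp only [hstepdef, if_pos h]
      exact ⟨h.1, h.2 n, Or.inr h.2⟩
    · have h2 : ∃ d, d ≤ p ∧ d ≤ f n ∧ Inv d := by
        rcases hp with ⟨k, hk⟩ | hlb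
        · obtain ⟨k', hk1, hk2⟩ := hf.1 k n
          exact ⟨f k', hk ▸ hk1, hk2, Or.inl ⟨k', rfl⟩⟩
        · exact ⟨p, le_rfl, hlb n, Or.inr hlb⟩
      simp only [hstepdef, if_neg h, dif_pos h2]
      exact h2.choose_spec
  -- the descending chain
  set c : ℕ → P := fun n => Nat.rec (f 0) (fun n p => step n p) n with hc
  have hc0 : c 0 = f 0 := rfl
  have hcsucc : ∀ n, c (n + 1) = step n (c n) := fun n => rfl
  have hcinv : ∀ n, Inv (c n) := by
    intro n
    induction n with
    | zero => exact Or.inl ⟨0, rfl⟩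
    | succ n ih => rw [hcsucc]; exact (hstep n (c n) ih).2.2
  have hcdec : ∀ n, c (n + 1) ≤ c n := fun n => (hstep n (c n) (hcinv n)).1
  have hcf : ∀ n, c (n + 1) ≤ f n := fun n => (hstep n (c n) (hcinv n)).2.1
  have hmono : ∀ m n, m ≤ n → c n ≤ c m := by
    intro m n hmn
    induction n with
    | zero => cases Nat.le_zero.mp hmn; exact le_rfl
    | succ n ih =>
      rcases Nat.lt_or_ge m (n + 1) with h | h
      · exact le_trans (hcdec n) (ih (Nat.lt_succ_iff.mp h))
      · have : m = n + 1 := le_antisymm hmn h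
        subst this; exact le_rfl
  -- the extension g enumerates the upward closure of the chain
  set g : ℕ → P := fun k =>
    if c k.unpair.1 ≤ e k.unpair.2 then e k.unpair.2 else c k.unpair.1 with hg
  have hglb : ∀ k, c k.unpair.1 ≤ g k := by
    intro k
    by_cases h : c k.unpair.1 ≤ e k.unpair.2
    · simp only [hg, if_pos h]; exact h
    · simp only [hg, if_neg h]; exact le_rfl
  have hmem : ∀ p, (∃ n, c n ≤ p) → ∃ k, g k = p := by
    rintro p ⟨n, hn⟩
    obtain ⟨m, hm⟩ := he p
    refine ⟨Nat.pair n m, ?_⟩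
    simp only [hg, Nat.unpair_pair, hm, if_pos hn]
  have hcmem : ∀ n, ∃ k, g k = c n := fun n => hmem (c n) ⟨n, le_rfl⟩
  refine ⟨g, ?_, ?_, ?_⟩
  · -- IsEnumeratedFilter g
    constructor
    · intro i j
      set N := max i.unpair.1 j.unpair.1 with hN
      obtain ⟨k, hk⟩ := hcmem N
      refine ⟨k, ?_, ?_⟩
      · exact hk ▸ le_trans (hmono _ _ (le_max_left _ _)) (hglb i)
      · exact hk ▸ le_trans (hmono _ _ (le_max_right _ _)) (hglb j)
    · intro q ⟨i, hi⟩
      exact hmem q ⟨i.unpair.1, le_trans (hglb i) hi⟩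
  · -- range f ⊆ range g
    rintro p ⟨i, rfl⟩
    obtain ⟨k, hk⟩ := hmem (f i) ⟨i + 1, hcf i⟩
    exact ⟨k, hk⟩
  · -- unboundedness
    rintro ⟨q, hq⟩
    have hqc : ∀ n, q < c n := by
      intro n
      obtain ⟨k, hk⟩ := hcmem n
      exact hk ▸ hq k
    have hqf : ∀ i, q ≤ f i := by
      intro i
      obtain ⟨k, hk⟩ := hmem (f i) ⟨i + 1, hcf i⟩
      exact le_of_lt (hk ▸ hq k)
    obtain ⟨n, rfl⟩ := he q
    have hcond : e n ≤ c n ∧ ∀ i, e n ≤ f i := ⟨le_of_lt (hqc n), hqf⟩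
    have : c (n + 1) = e n := by rw [hcsucc, hstepdef]; exact if_pos hcond
    exact lt_irrefl (e n) (this ▸ hqc (n + 1))
end
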